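/- Let m₀, i : ℝ → ℝ → ℝ be continuous, m₁ : ℝ → ℝ → ℝ → ℝ be continuous, and S₀ : ℝ → ℝ. Define S(t,a) := S₀(t−a)·exp(−∫₀ᵃ (m₀(t−a+τ,τ) + i(t−a+τ,τ)) dτ), M₁(t,a,d) := ∫₀^d m₁(t−d+τ, a−d+τ, τ) dτ, and C(t,a,d) := i(t−d, a−d)·S(t−d, a−d)·exp(−M₁(t,a,d)). Then C(t,a,0) = i(t,a)·S(t,a) for all (t,a), and for every (t,a,d) with d ≥ 0 the function s ↦ C(t+s, a+s, d+s) has derivative −m₁(t,a,d)·C(t,a,d) at s = 0. (That is, C solves the Cauchy problem (∂ₜ+∂ₐ+∂_d)C = −m₁·C with initial condition C(t,a,0) = i(t,a)·S(t,a).) -/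

import Mathlib

open Real intervalIntegral

theorem hasDerivAt_exp_neg_integral {g : ℝ → ℝ} (hg : Continuous g) (a x : ℝ) :
    HasDerivAt (fun y => exp (-∫ τ in a..y, g τ)) (-g x * exp (-∫ τ in a..x, g τ)) x := by
  have hint : HasDerivAt (fun y => ∫ τ in a..y, g τ) (g x) x :=
    integral_hasDerivAt_right (hg.intervalIntegrable _ _) (hg.stronglyMeasurableAtFilter _ _)
      hg.continuousAt
  convert hint.fun_neg.exp using 1
  ring

theorem keiding_C_solves_cauchy_problem_general
    (i : ℝ → ℝ → ℝ)
    (m₁ : ℝ → ℝ → ℝ → ℝ)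
    (hm₁ : Continuous fun q : ℝ × ℝ × ℝ => m₁ q.1 q.2.1 q.2.2)
    (S : ℝ → ℝ → ℝ)
    (M₁ : ℝ → ℝ → ℝ → ℝ)
    (hM₁ : ∀ t a d : ℝ, M₁ t a d =
      ∫ τ in (0:ℝ)..d, m₁ (t - d + τ) (a - d + τ) τ)
    (C : ℝ → ℝ → ℝ → ℝ)
    (hC : ∀ t a d : ℝ, C t a d =
      i (t - d) (a - d) * S (t - d) (a - d) * Real.exp (-M₁ t a d)) :
    (∀ t a : ℝ, C t a 0 = i t a * S t a) ∧
    (∀ t a d : ℝ, 0 ≤ d →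
      HasDerivAt (fun s : ℝ => C (t + s) (a + s) (d + s))
        (-m₁ t a d * C t a d) 0) := by
  refine ⟨fun t a => by simp [hC, hM₁], fun t a d _ => ?_⟩
  set g : ℝ → ℝ := fun τ => m₁ (t - d + τ) (a - d + τ) τ
  have hg : Continuous g := hm₁.comp (f := fun τ : ℝ => (t - d + τ, a - d + τ, τ)) (by fun_prop)
  -- along a characteristic the entry point (t - d, a - d) is fixed and only M₁'s upper limit moves
  have along_characteristic : (fun s => C (t + s) (a + s) (d + s)) =
      fun s => i (t - d) (a - d) * S (t - d) (a - d) * exp (-∫ τ in (0:ℝ)..d + s, g τ) := by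
    funext s
    rw [hC, hM₁, add_sub_add_right_eq_sub, add_sub_add_right_eq_sub]
  rw [along_characteristic, hC, hM₁]
  have hderiv := ((hasDerivAt_exp_neg_integral hg 0 (d + 0)).comp_const_add d 0).const_mul
    (i (t - d) (a - d) * S (t - d) (a - d))
  simp only [add_zero] at hderiv
  refine hderiv.congr_deriv ?_
  simp only [g, sub_add_cancel]
  ring

/-- The number of cases
`C(t,a,d) = i(t−d,a−d)·S(t−d,a−d)·exp(−M₁(t,a,d))` solves the Cauchy problem
`(∂ₜ+∂ₐ+∂_d)C = −m₁·C` with initial condition `C(t,a,0) = i(t,a)·S(t,a)`. -/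
theorem keiding_C_solves_cauchy_problem
    (m₀ i : ℝ → ℝ → ℝ)
    (hm₀ : Continuous fun q : ℝ × ℝ => m₀ q.1 q.2)
    (hi : Continuous fun q : ℝ × ℝ => i q.1 q.2)
    (m₁ : ℝ → ℝ → ℝ → ℝ)
    (hm₁ : Continuous fun q : ℝ × ℝ × ℝ => m₁ q.1 q.2.1 q.2.2)
    (S₀ : ℝ → ℝ) (S : ℝ → ℝ → ℝ)
    (hS : ∀ t a : ℝ, S t a = S₀ (t - a) *
      Real.exp (-∫ τ in (0:ℝ)..a, (m₀ (t - a + τ) τ + i (t - a + τ) τ)))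
    (M₁ : ℝ → ℝ → ℝ → ℝ)
    (hM₁ : ∀ t a d : ℝ, M₁ t a d =
      ∫ τ in (0:ℝ)..d, m₁ (t - d + τ) (a - d + τ) τ)
    (C : ℝ → ℝ → ℝ → ℝ)
    (hC : ∀ t a d : ℝ, C t a d =
      i (t - d) (a - d) * S (t - d) (a - d) * Real.exp (-M₁ t a d)) :
    (∀ t a : ℝ, C t a 0 = i t a * S t a) ∧
    (∀ t a d : ℝ, 0 ≤ d →
      HasDerivAt (fun s : ℝ => C (t + s) (a + s) (d + s))
        (-m₁ t a d * C t a d) 0) :=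
  keiding_C_solves_cauchy_problem_general i m₁ hm₁ S M₁ hM₁ C hC
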